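/- The Cayley–Menger determinant as a quadratic polynomial in one squared length. Let n ≥ 2 and fix nonnegative reals l_{ij} for 0 ≤ i < j ≤ n with (i,j) ≠ (0,n). For t ∈ ℝ, let M(t) be the (n+2)×(n+2) bordered Cayley–Menger matrix in which the entry for the pair (0,n) is −½ t (i.e., l_{0n}² = t) and all other entries are determined by the fixed l_{ij}. Then t ↦ det M(t) is a polynomial in t of degree at most 2, and its coefficient of t² equals −¼ · det M′, where M′ is the n×n bordered Cayley–Menger matrix of the lengths l_{ij} with 1 ≤ i < j ≤ n−1 (the vertices 0 and n omitted). -/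

import Mathlib

/-!
The squared length `t` of the pair `(0, n)` occurs only in the rows of the vertices `0` and `n`,
so multilinearity of the determinant in these two rows makes `det M(t)` a quadratic polynomial
in `t`. Its leading coefficient is the determinant with those rows replaced by `−½ e_n` and
`−½ e_0`; moving the two vertices to the front makes that matrix block lower triangular, with
diagonal blocks `!![0, −½; −½, 0]` and the Cayley–Menger matrix of the remaining vertices.
-/

open Real

noncomputable def cayleyMengerSq {m : ℕ} (s : Fin m → Fin m → ℝ) :
    Matrix (Option (Fin m)) (Option (Fin m)) ℝ :=
  Matrix.of fun i j =>
    match i, j with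
    | none, none => 0
    | none, some _ => 1
    | some _, none => 1
    | some a, some b => if a = b then 0 else -(1/2) * s a b

namespace Matrix

variable {ι R : Type*} [DecidableEq ι]

theorem add_smul_single_add_single_eq_updateRow_updateRow [Semiring R] {p q : ι} (hpq : p ≠ q)
    (M : Matrix ι ι R) (t a b : R) :
    M + t • (single p q a + single q p b) =
      (M.updateRow p (M p + t • Pi.single q a)).updateRow q (M q + t • Pi.single p b) := by
  ext i j
  rcases eq_or_ne i q with rfl | hiq
  · simp [single_apply, Pi.single_apply, hpq, eq_comm]
  rcases eq_or_ne i p with rfl | hip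
  · simp [single_apply, Pi.single_apply, hiq, hiq.symm, eq_comm]
  · simp [hip, hiq, hip.symm, hiq.symm]

variable [Fintype ι] [CommRing R]

theorem det_add_smul_single_add_single {p q : ι} (hpq : p ≠ q) (M : Matrix ι ι R) (t a b : R) :
    (M + t • (single p q a + single q p b)).det =
      t ^ 2 * ((M.updateRow p (Pi.single q a)).updateRow q (Pi.single p b)).det +
        t * ((M.updateRow p (Pi.single q a)).det + (M.updateRow q (Pi.single p b)).det) +
        M.det := by
  have expand (N : Matrix ι ι R) (i : ι) (v : ι → R) :
      (N.updateRow i (N i + t • v)).det = N.det + t * (N.updateRow i v).det := by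
    rw [det_updateRow_add, det_updateRow_smul, updateRow_eq_self]
  have hq : (M.updateRow p (M p + t • Pi.single q a)) q = M q := updateRow_ne hpq.symm
  have hp : (M.updateRow q (Pi.single p b)) p = M p := updateRow_ne hpq
  rw [add_smul_single_add_single_eq_updateRow_updateRow hpq, ← hq, expand, expand,
    updateRow_comm _ hpq, ← hp, expand, updateRow_comm _ hpq.symm]
  ring

theorem det_updateRow_single_updateRow_single {κ : Type*} [Fintype κ] [DecidableEq κ]
    {p q : ι} {f : κ → ι} (hf : Function.Bijective (Sum.elim ![p, q] f))
    (M : Matrix ι ι R) (c : R) :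
    ((M.updateRow p (Pi.single q c)).updateRow q (Pi.single p c)).det =
      -c ^ 2 * (M.submatrix f f).det := by
  set e := Equiv.ofBijective _ hf
  have hpq : p ≠ q := fun h => by simpa using hf.injective (a₁ := .inl 0) (a₂ := .inl 1) h
  have hfp (k : κ) : f k ≠ p := fun h => by
    simpa using hf.injective (a₁ := .inr k) (a₂ := .inl 0) h
  have hfq (k : κ) : f k ≠ q := fun h => by
    simpa using hf.injective (a₁ := .inr k) (a₂ := .inl 1) h
  rw [← det_submatrix_equiv_self e]
  set B := ((M.updateRow p (Pi.single q c)).updateRow q (Pi.single p c)).submatrix e e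
  have h₁₁ : B.toBlocks₁₁ = !![0, c; c, 0] := by
    ext i j
    fin_cases i <;> fin_cases j <;> simp [B, e, toBlocks₁₁, updateRow_apply, hpq, hpq.symm]
  have h₁₂ : B.toBlocks₁₂ = 0 := by
    ext i k
    fin_cases i <;> simp [B, e, toBlocks₁₂, updateRow_apply, hpq, hfp, hfq]
  have h₂₂ : B.toBlocks₂₂ = M.submatrix f f := by
    ext i j
    simp [B, e, toBlocks₂₂, updateRow_apply, hfp, hfq]
  rw [← fromBlocks_toBlocks B, h₁₁, h₁₂, h₂₂, det_fromBlocks_zero₁₂, det_fin_two_of]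
  ring

end Matrix

theorem cayleyMengerSq_submatrix_optionMap {k m : ℕ} (s : Fin m → Fin m → ℝ)
    {f : Fin k → Fin m} (hf : Function.Injective f) :
    (cayleyMengerSq s).submatrix (Option.map f) (Option.map f) =
      cayleyMengerSq fun i j => s (f i) (f j) := by
  ext (_ | i) (_ | j) <;> simp [cayleyMengerSq, hf.eq_iff]

theorem cayleyMengerSq_ite_pair_eq_add_smul {m : ℕ} (s : Fin m → Fin m → ℝ) {p q : Fin m}
    (hpq : p ≠ q) (t : ℝ) :
    cayleyMengerSq (fun i j => if (i = p ∧ j = q) ∨ (i = q ∧ j = p) then t else s i j) =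
      cayleyMengerSq (fun i j => if (i = p ∧ j = q) ∨ (i = q ∧ j = p) then 0 else s i j) +
        t • (Matrix.single (some p) (some q) (-(1/2)) +
          Matrix.single (some q) (some p) (-(1/2))) := by
  ext (_ | i) (_ | j) <;> simp [cayleyMengerSq, Matrix.single_apply]
  split_ifs <;> grind

theorem bijective_sumElim_zero_last_optionMap_succ {n : ℕ} (hn : 1 ≤ n) :
    Function.Bijective (Sum.elim ![some 0, some (Fin.last n)]
      (Option.map fun k : Fin (n - 1) => (⟨k + 1, by omega⟩ : Fin (n + 1)))) := by
  rw [Fintype.bijective_iff_injective_and_card]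
  refine ⟨Function.Injective.sumElim ?_ (Option.map_injective fun a b h => ?_) ?_, ?_⟩
  · have : (0 : Fin (n + 1)) ≠ Fin.last n := by simp [Fin.ext_iff]; omega
    intro a b h
    fin_cases a <;> fin_cases b <;> simp_all [eq_comm]
  · simpa [Fin.ext_iff] using h
  · intro a b
    fin_cases a <;> rcases b with _ | b <;> simp [Fin.ext_iff]; omega
  · simp; omega

/-- **The Cayley–Menger determinant as a quadratic polynomial in one squared length.**
Fix `n ≥ 2` and nonnegative symmetric lengths `l i j` for the pairs of vertices
`0, …, n` other than `(0, n)`.  Letting `M t` be the bordered Cayley–Menger matrix in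
which the squared length of the pair `(0, n)` is `t`, the function `t ↦ det (M t)` is a
polynomial of degree at most `2` whose coefficient of `t²` is `−¼ det M′`, where `M′`
is the bordered Cayley–Menger matrix of the lengths on the vertices `1, …, n−1`. -/
theorem cayleyMenger_det_quadratic_in_squared_length (n : ℕ) (hn : 2 ≤ n)
    (l : Fin (n + 1) → Fin (n + 1) → ℝ) :
    ∃ a b c : ℝ,
      (∀ t : ℝ,
        (cayleyMengerSq (fun i j =>
          if (i = 0 ∧ j = Fin.last n) ∨ (i = Fin.last n ∧ j = 0) then t
          else (l i j) ^ 2)).det = a * t ^ 2 + b * t + c) ∧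
      a = -(1/4) * (cayleyMengerSq (fun i j : Fin (n - 1) =>
          (l ⟨(i : ℕ) + 1, by have := i.isLt; omega⟩
             ⟨(j : ℕ) + 1, by have := j.isLt; omega⟩) ^ 2)).det := by
  have h0last : (0 : Fin (n + 1)) ≠ Fin.last n := by simp [Fin.ext_iff]; omega
  set M₀ := cayleyMengerSq fun i j =>
    if (i = 0 ∧ j = Fin.last n) ∨ (i = Fin.last n ∧ j = 0) then 0 else l i j ^ 2
  set u : Option (Fin (n + 1)) → ℝ := Pi.single (some (Fin.last n)) (-(1/2))
  set v : Option (Fin (n + 1)) → ℝ := Pi.single (some 0) (-(1/2))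
  refine ⟨((M₀.updateRow (some 0) u).updateRow (some (Fin.last n)) v).det,
    (M₀.updateRow (some 0) u).det + (M₀.updateRow (some (Fin.last n)) v).det, M₀.det,
    fun t => ?_, ?_⟩
  · rw [cayleyMengerSq_ite_pair_eq_add_smul _ h0last,
      Matrix.det_add_smul_single_add_single (Option.some_injective _ |>.ne h0last)]
    ring
  · rw [Matrix.det_updateRow_single_updateRow_single
        (bijective_sumElim_zero_last_optionMap_succ (by omega)),
      cayleyMengerSq_submatrix_optionMap _ fun a b h => by simpa [Fin.ext_iff] using h]
    norm_num
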